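/- arXiv:1405.1665 — 5 statements merged into one kernel-verified Lean document; each statement's English description precedes it below -/
import Mathlib

section
/- Let θ, a ∈ ℝ and 0 < t ≤ 2 with θ ≤ a - t/4. If X is a random variable with distribution N(θ, 1), then P(X ≥ a) ≤ 1/2 - t/20. -/
open MeasureTheory ProbabilityTheory Real Set

lemma gauss_pdf_lb (x : ℝ) (hx : x ^ 2 ≤ 1 / 4) :
    (1 : ℝ) / 5 ≤ gaussianPDFReal 0 1 x := by
  rw [gaussianPDFReal]
  simp only [NNReal.coe_one, mul_one, sub_zero]
  have hπ : Real.pi ≤ 4 := Real.pi_le_four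
  have hsqrt : Real.sqrt (2 * Real.pi) ≤ 3 := by
    have h9 : Real.sqrt (2 * Real.pi) ≤ Real.sqrt 9 := Real.sqrt_le_sqrt (by nlinarith)
    rwa [show (9 : ℝ) = 3 ^ 2 by norm_num, Real.sqrt_sq (by norm_num : (0:ℝ) ≤ 3)] at h9
  have hsqrt_pos : 0 < Real.sqrt (2 * Real.pi) := Real.sqrt_pos.mpr (by positivity)
  have hinv : (1 : ℝ) / 3 ≤ (Real.sqrt (2 * Real.pi))⁻¹ := by
    rw [le_inv_comm₀ (by norm_num) hsqrt_pos]
    linarith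
  have hexp : (7 : ℝ) / 8 ≤ Real.exp (-x ^ 2 / 2) := by
    have h1 : (-x ^ 2 / 2) + 1 ≤ Real.exp (-x ^ 2 / 2) := Real.add_one_le_exp _
    nlinarith
  calc (1 : ℝ) / 5 ≤ (1 / 3) * (7 / 8) := by norm_num
    _ ≤ (Real.sqrt (2 * Real.pi))⁻¹ * Real.exp (-x ^ 2 / 2) := by
        apply mul_le_mul hinv hexp (by norm_num) (le_of_lt (by positivity))

lemma gauss_Ioi_zero : ∫ x in Ioi (0:ℝ), gaussianPDFReal 0 1 x = 1 / 2 := by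
  have hint : Integrable (gaussianPDFReal 0 1) := integrable_gaussianPDFReal 0 1
  have htot : ∫ x, gaussianPDFReal 0 1 x = 1 := integral_gaussianPDFReal_eq_one 0 one_ne_zero
  have hsymm : ∫ x in Iic (0:ℝ), gaussianPDFReal 0 1 x
      = ∫ x in Ioi (0:ℝ), gaussianPDFReal 0 1 x := by
    rw [show Iic (0:ℝ) = Iic (-0) by norm_num, ← integral_comp_neg_Ioi]
    apply setIntegral_congr_fun measurableSet_Ioi
    intro x _
    simp only [gaussianPDFReal_def]
    ring_nf
  have hu := intervalIntegral.integral_Iic_add_Ioi (b := (0:ℝ)) hint.integrableOn hint.integrableOn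
  rw [htot] at hu
  have hu' : (∫ x in Iic (0:ℝ), gaussianPDFReal 0 1 x)
      + ∫ x in Ioi (0:ℝ), gaussianPDFReal 0 1 x = 1 := hu
  linarith

theorem gauss_Ici_bound (b t : ℝ) (ht0 : 0 < t) (ht2 : t ≤ 2) (hb : t / 4 ≤ b) :
    ∫ x in Ici b, gaussianPDFReal 0 1 x ≤ 1 / 2 - t / 20 := by
  have hint : Integrable (gaussianPDFReal 0 1) := integrable_gaussianPDFReal 0 1
  have hb0 : 0 < b := lt_of_lt_of_le (by linarith) hb
  have hIci : ∫ x in Ici b, gaussianPDFReal 0 1 x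
      = ∫ x in Ioi b, gaussianPDFReal 0 1 x :=
    setIntegral_congr_set Ioi_ae_eq_Ici.symm
  have hsplit : (∫ x in Ioc (0:ℝ) b, gaussianPDFReal 0 1 x)
      + ∫ x in Ioi b, gaussianPDFReal 0 1 x = 1 / 2 := by
    have hu := setIntegral_union (Set.Ioc_disjoint_Ioi (le_refl b)) measurableSet_Ioi
      (hint.integrableOn (s := Set.Ioc (0:ℝ) b)) (hint.integrableOn (s := Set.Ioi b))
    rw [Set.Ioc_union_Ioi_eq_Ioi hb0.le, gauss_Ioi_zero] at hu
    exact hu.symm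
  have hlow : t / 20 ≤ ∫ x in Ioc (0:ℝ) b, gaussianPDFReal 0 1 x := by
    have hsub : Ioc (0:ℝ) (t/4) ⊆ Ioc (0:ℝ) b := Set.Ioc_subset_Ioc_right hb
    have h1 : ∫ x in Ioc (0:ℝ) (t/4), gaussianPDFReal 0 1 x
        ≤ ∫ x in Ioc (0:ℝ) b, gaussianPDFReal 0 1 x := by
      apply setIntegral_mono_set hint.integrableOn
        (ae_of_all _ fun x => gaussianPDFReal_nonneg 0 1 x) (HasSubset.Subset.eventuallyLE hsub)
    have h2 : t / 20 ≤ ∫ x in Ioc (0:ℝ) (t/4), gaussianPDFReal 0 1 x := by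
      have hconst : ∫ x in Ioc (0:ℝ) (t/4), (1:ℝ)/5 = t / 20 := by
        rw [setIntegral_const, Real.volume_real_Ioc_of_le (by linarith), smul_eq_mul]
        ring
      rw [← hconst]
      apply setIntegral_mono_on ((integrableOn_const_iff (C := (1:ℝ)/5)).mpr (Or.inr (by
        rw [Real.volume_Ioc]; exact ENNReal.ofReal_lt_top))) hint.integrableOn
        measurableSet_Ioc
      intro x hx
      apply gauss_pdf_lb
      have hx1 : 0 < x := hx.1
      have hx2 : x ≤ t / 4 := hx.2
      nlinarith
    linarith
  rw [hIci]; linarith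

/-- If `X ~ N(θ, 1)` and `θ ≤ a - t/4` with `0 < t ≤ 2`, then `P(X ≥ a) ≤ 1/2 - t/20`. -/
theorem stmt_2 (θ a t : ℝ) (ht0 : 0 < t) (ht2 : t ≤ 2) (hθ : θ ≤ a - t / 4)
    {Ω : Type*} [MeasurableSpace Ω] (μ : Measure Ω) [IsProbabilityMeasure μ]
    (X : Ω → ℝ) (hmX : Measurable X) (hX : μ.map X = gaussianReal θ 1) :
    (μ {ω | X ω ≥ a}).toReal ≤ 1 / 2 - t / 20 := by
  have h1 : μ {ω | X ω ≥ a} = gaussianReal θ 1 (Ici a) := by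
    rw [← hX, Measure.map_apply hmX measurableSet_Ici]
    rfl
  have h2 : gaussianReal θ 1 (Ici a) = gaussianReal 0 1 (Ici (a - θ)) := by
    have hmap : (gaussianReal 0 1).map (· + θ) = gaussianReal θ 1 := by
      rw [gaussianReal_map_add_const θ, zero_add]
    rw [← hmap, Measure.map_apply (measurable_add_const θ) measurableSet_Ici]
    congr 1
    ext x
    simp only [Set.mem_preimage, Set.mem_Ici]
    constructor <;> intro h <;> linarith
  rw [h1, h2, gaussianReal_apply_eq_integral 0 one_ne_zero,
    ENNReal.toReal_ofReal (setIntegral_nonneg measurableSet_Ici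
      (fun x _ => gaussianPDFReal_nonneg 0 1 x))]
  exact gauss_Ici_bound (a - θ) t ht0 ht2 (by linarith)
end

section
/- There exist constants L ≥ 1 and C > 0 such that the following holds. For all integers d ≥ 2, s ≥ 1, m ≥ 1, n ≥ 1, every σ > 0, every real α with 1 ≤ α ≤ d/s, and every vector θ ∈ ℝ^d with at most s nonzero coordinates: if X̄ = (X̄₁, …, X̄_d) is a random vector with independent coordinates, where X̄ᵢ has distribution N(θᵢ, ασ²/(L m n log d)), and the thresholding estimator θ̂ is defined coordinatewise by θ̂ᵢ = X̄ᵢ if X̄ᵢ² ≥ ασ²/(mn) and θ̂ᵢ = 0 otherwise, then E[ Σ_{i=1}^{d} (θ̂ᵢ - θᵢ)² ] ≤ C α s σ²/(mn). -/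
open MeasureTheory ProbabilityTheory

open Real
open scoped NNReal ENNReal

lemma aux_ue (u : ℝ) : u * Real.exp (-u) ≤ (Real.exp 1)⁻¹ := by
  have h1 : u ≤ Real.exp (u - 1) := by
    have := Real.add_one_le_exp (u - 1); linarith
  calc u * Real.exp (-u) ≤ Real.exp (u - 1) * Real.exp (-u) :=
        mul_le_mul_of_nonneg_right h1 (Real.exp_nonneg _)
    _ = (Real.exp 1)⁻¹ := by
        rw [← Real.exp_add, show u - 1 + -u = -1 by ring, Real.exp_neg]

lemma aux_sq_exp (c y : ℝ) (hc : 0 < c) :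
    y ^ 2 * Real.exp (-y ^ 2 / (2 * c)) ≤ (4 * c / Real.exp 1) * Real.exp (-y ^ 2 / (4 * c)) := by
  have key := aux_ue (y ^ 2 / (4 * c))
  have he : 0 ≤ Real.exp (-y ^ 2 / (4 * c)) := Real.exp_nonneg _
  have h2 : Real.exp (-y ^ 2 / (2 * c))
      = Real.exp (-y ^ 2 / (4 * c)) * Real.exp (-y ^ 2 / (4 * c)) := by
    rw [← Real.exp_add]; congr 1; field_simp; ring
  have h3 : Real.exp (-(y ^ 2 / (4 * c))) = Real.exp (-y ^ 2 / (4 * c)) := by rw [neg_div]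
  rw [h2]
  calc y ^ 2 * (Real.exp (-y ^ 2 / (4 * c)) * Real.exp (-y ^ 2 / (4 * c)))
      = 4 * c * ((y ^ 2 / (4 * c)) * Real.exp (-(y ^ 2 / (4 * c))) * Real.exp (-y ^ 2 / (4 * c))) := by
        rw [h3]; field_simp
    _ ≤ 4 * c * ((Real.exp 1)⁻¹ * Real.exp (-y ^ 2 / (4 * c))) := by
        refine mul_le_mul_of_nonneg_left ?_ (by positivity)
        exact mul_le_mul_of_nonneg_right key he
    _ = (4 * c / Real.exp 1) * Real.exp (-y ^ 2 / (4 * c)) := by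
        rw [div_eq_mul_inv]; ring

lemma gauss_int (a : ℝ) (ha : 0 < a) :
    ∫ x : ℝ, Real.exp (-x ^ 2 / a) = Real.sqrt (Real.pi * a) := by
  have h := integral_gaussian (1 / a)
  have h2 : (fun x : ℝ => Real.exp (-(1 / a) * x ^ 2)) = fun x : ℝ => Real.exp (-x ^ 2 / a) := by
    funext x; congr 1; field_simp
  rw [h2] at h
  rw [h]; congr 1; field_simp

lemma integrable_exp_shift (a ϑ : ℝ) (ha : 0 < a) :
    Integrable (fun x : ℝ => Real.exp (-(x - ϑ) ^ 2 / a)) := by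
  have hbase : Integrable (fun y : ℝ => Real.exp (-y ^ 2 / a)) volume := by
    have h := integrable_exp_neg_mul_sq (b := 1 / a) (by positivity)
    have h2 : (fun x : ℝ => Real.exp (-(1 / a) * x ^ 2)) = fun x : ℝ => Real.exp (-x ^ 2 / a) := by
      funext x; congr 1; field_simp
    rwa [h2] at h
  exact hbase.comp_sub_right ϑ

lemma integral_exp_shift (a ϑ : ℝ) (ha : 0 < a) :
    ∫ x : ℝ, Real.exp (-(x - ϑ) ^ 2 / a) = Real.sqrt (Real.pi * a) := by
  have h := integral_sub_right_eq_self (μ := volume) (fun y : ℝ => Real.exp (-y ^ 2 / a)) ϑ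
  rw [h, gauss_int a ha]

lemma coord_bound (ϑ t v0 : ℝ) (hv : 0 < v0) (ht : 0 < t) :
    Integrable (fun x => ((if t ≤ x ^ 2 then x else 0) - ϑ) ^ 2) (gaussianReal ϑ v0.toNNReal) ∧
    (∫ x, ((if t ≤ x ^ 2 then x else 0) - ϑ) ^ 2 ∂(gaussianReal ϑ v0.toNNReal) ≤ 6 * v0 + 2 * t) ∧
    (ϑ = 0 → ∫ x, ((if t ≤ x ^ 2 then x else 0) - ϑ) ^ 2 ∂(gaussianReal ϑ v0.toNNReal)
        ≤ 6 * v0 * Real.exp (-(t / (4 * v0)))) := by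
  have hvpos : 0 < v0.toNNReal := Real.toNNReal_pos.mpr hv
  have hvne : v0.toNNReal ≠ 0 := hvpos.ne'
  have hvv : ((v0.toNNReal : ℝ≥0) : ℝ) = v0 := Real.coe_toNNReal _ hv.le
  set G : ℝ → ℝ := fun x => ((if t ≤ x ^ 2 then x else 0) - ϑ) ^ 2 with hG
  have hGm : Measurable G := by
    apply Measurable.pow_const
    apply Measurable.sub _ measurable_const
    exact Measurable.ite (measurableSet_le measurable_const (measurable_id.pow_const 2))
      measurable_id measurable_const
  have hGnn : ∀ x, 0 ≤ G x := fun x => sq_nonneg _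
  set p : ℝ → ℝ := fun x => gaussianPDFReal ϑ v0.toNNReal x with hp
  have hpm : Measurable (fun x => (p x).toNNReal) :=
    (measurable_gaussianPDFReal _ _).real_toNNReal
  have hpnn : ∀ x, 0 ≤ p x := fun x => gaussianPDFReal_nonneg _ _ x
  have hgauss : gaussianReal ϑ v0.toNNReal
      = volume.withDensity (fun x => ((p x).toNNReal : ℝ≥0∞)) := by
    rw [gaussianReal_of_var_ne_zero ϑ hvne]
    rfl
  have key_int : ∫ x, G x ∂(gaussianReal ϑ v0.toNNReal) = ∫ x, p x * G x := by
    rw [hgauss, integral_withDensity_eq_integral_smul hpm]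
    congr 1; funext x
    simp [NNReal.smul_def, Real.coe_toNNReal _ (hpnn x)]
  have int_iff : Integrable G (gaussianReal ϑ v0.toNNReal)
      ↔ Integrable (fun x => p x * G x) volume := by
    rw [hgauss, integrable_withDensity_iff_integrable_smul hpm]
    apply integrable_congr
    refine Filter.EventuallyEq.of_eq (funext fun x => ?_)
    simp [NNReal.smul_def, Real.coe_toNNReal _ (hpnn x)]
  have hpdef : ∀ x, p x = (Real.sqrt (2 * π * v0))⁻¹ * Real.exp (-(x - ϑ) ^ 2 / (2 * v0)) := by
    intro x; rw [hp]; simp only [gaussianPDFReal, hvv]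
  set S : ℝ := (Real.sqrt (2 * π * v0))⁻¹ with hS
  have hSpos : 0 < S := by rw [hS]; positivity
  have hSsqrt : S * Real.sqrt (2 * π * v0) = 1 := inv_mul_cancel₀ (by positivity)
  set h1 : ℝ → ℝ := fun x => S * ((8 * v0 / Real.exp 1) * Real.exp (-(x - ϑ) ^ 2 / (4 * v0))
      + 2 * t * Real.exp (-(x - ϑ) ^ 2 / (2 * v0))) with hh1
  have h1_int : Integrable h1 volume := by
    apply Integrable.const_mul
    exact ((integrable_exp_shift (4 * v0) ϑ (by positivity)).const_mul _).add
      ((integrable_exp_shift (2 * v0) ϑ (by positivity)).const_mul _)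
  have hGle : ∀ x, G x ≤ 2 * (x - ϑ) ^ 2 + 2 * t := by
    intro x
    by_cases h : t ≤ x ^ 2
    · simp only [hG, if_pos h]
      nlinarith [sq_nonneg (x - ϑ)]
    · simp only [hG, if_neg h]
      nlinarith [sq_nonneg (2 * x - ϑ), le_of_not_ge h]
  have hdom : ∀ x, p x * G x ≤ h1 x := by
    intro x
    rw [hpdef x, hh1]
    have e1 : (x - ϑ) ^ 2 * Real.exp (-(x - ϑ) ^ 2 / (2 * v0))
        ≤ (4 * v0 / Real.exp 1) * Real.exp (-(x - ϑ) ^ 2 / (4 * v0)) :=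
      aux_sq_exp v0 (x - ϑ) hv
    have e2 : Real.exp (-(x - ϑ) ^ 2 / (2 * v0)) * G x
        ≤ Real.exp (-(x - ϑ) ^ 2 / (2 * v0)) * (2 * (x - ϑ) ^ 2 + 2 * t) :=
      mul_le_mul_of_nonneg_left (hGle x) (Real.exp_nonneg _)
    have e3 : Real.exp (-(x - ϑ) ^ 2 / (2 * v0)) * (2 * (x - ϑ) ^ 2 + 2 * t)
        ≤ (8 * v0 / Real.exp 1) * Real.exp (-(x - ϑ) ^ 2 / (4 * v0))
          + 2 * t * Real.exp (-(x - ϑ) ^ 2 / (2 * v0)) := by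
      have expand : Real.exp (-(x - ϑ) ^ 2 / (2 * v0)) * (2 * (x - ϑ) ^ 2 + 2 * t)
          = 2 * ((x - ϑ) ^ 2 * Real.exp (-(x - ϑ) ^ 2 / (2 * v0)))
            + 2 * t * Real.exp (-(x - ϑ) ^ 2 / (2 * v0)) := by ring
      have e1' : 2 * ((x - ϑ) ^ 2 * Real.exp (-(x - ϑ) ^ 2 / (2 * v0)))
          ≤ 2 * (4 * v0 / Real.exp 1 * Real.exp (-(x - ϑ) ^ 2 / (4 * v0))) :=
        mul_le_mul_of_nonneg_left e1 (by norm_num)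
      rw [expand, show 8 * v0 / Real.exp 1 * Real.exp (-(x - ϑ) ^ 2 / (4 * v0))
          = 2 * (4 * v0 / Real.exp 1 * Real.exp (-(x - ϑ) ^ 2 / (4 * v0))) by ring]
      exact add_le_add_left e1' _
    calc S * Real.exp (-(x - ϑ) ^ 2 / (2 * v0)) * G x
        = S * (Real.exp (-(x - ϑ) ^ 2 / (2 * v0)) * G x) := by ring
      _ ≤ S * ((8 * v0 / Real.exp 1) * Real.exp (-(x - ϑ) ^ 2 / (4 * v0))
          + 2 * t * Real.exp (-(x - ϑ) ^ 2 / (2 * v0))) :=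
          mul_le_mul_of_nonneg_left (e2.trans e3) hSpos.le
  have hpG_int : Integrable (fun x => p x * G x) volume := by
    apply h1_int.mono' ((measurable_gaussianPDFReal _ _).mul hGm).aestronglyMeasurable
    refine Filter.Eventually.of_forall fun x => ?_
    change ‖p x * G x‖ ≤ h1 x
    rw [Real.norm_of_nonneg (mul_nonneg (hpnn x) (hGnn x))]
    exact hdom x
  have h1_val : ∫ x, h1 x
      = S * ((8 * v0 / Real.exp 1) * (Real.sqrt 2 * Real.sqrt (2 * π * v0))
        + 2 * t * Real.sqrt (2 * π * v0)) := by
    rw [hh1, integral_const_mul,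
      integral_add ((integrable_exp_shift (4 * v0) ϑ (by positivity)).const_mul _)
        ((integrable_exp_shift (2 * v0) ϑ (by positivity)).const_mul _),
      integral_const_mul, integral_const_mul, integral_exp_shift _ _ (by positivity),
      integral_exp_shift _ _ (by positivity)]
    have r1 : Real.sqrt (π * (4 * v0)) = Real.sqrt 2 * Real.sqrt (2 * π * v0) := by
      rw [← Real.sqrt_mul (by norm_num)]
      congr 1; ring
    have r2 : Real.sqrt (π * (2 * v0)) = Real.sqrt (2 * π * v0) := by congr 1; ring
    rw [r1, r2]
  have sqrt2_le : Real.sqrt 2 ≤ 1.5 := by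
    rw [show (1.5 : ℝ) = Real.sqrt (1.5 ^ 2) from (Real.sqrt_sq (by norm_num)).symm]
    exact Real.sqrt_le_sqrt (by norm_num)
  have exp1_ge : (2 : ℝ) ≤ Real.exp 1 := by
    have := Real.exp_one_gt_d9; linarith
  have h1_le : ∫ x, h1 x ≤ 6 * v0 + 2 * t := by
    rw [h1_val]
    have expand : S * ((8 * v0 / Real.exp 1) * (Real.sqrt 2 * Real.sqrt (2 * π * v0))
        + 2 * t * Real.sqrt (2 * π * v0))
        = ((8 * v0 / Real.exp 1) * Real.sqrt 2 + 2 * t) * (S * Real.sqrt (2 * π * v0)) := by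
      ring
    rw [expand, hSsqrt, mul_one]
    have e1 : 8 * v0 / Real.exp 1 ≤ 4 * v0 := by
      rw [div_le_iff₀ (Real.exp_pos 1)]; nlinarith
    have e2 : (8 * v0 / Real.exp 1) * Real.sqrt 2 ≤ 4 * v0 * 1.5 :=
      mul_le_mul e1 sqrt2_le (Real.sqrt_nonneg 2) (by positivity)
    linarith
  refine ⟨int_iff.mpr hpG_int, ?_, ?_⟩
  · rw [key_int]
    calc ∫ x, p x * G x ≤ ∫ x, h1 x :=
          integral_mono_of_nonneg (Filter.Eventually.of_forall fun x =>
            mul_nonneg (hpnn x) (hGnn x)) h1_int (Filter.Eventually.of_forall hdom)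
      _ ≤ 6 * v0 + 2 * t := h1_le

  · intro hph
    subst hph
    rw [key_int]
    set E : ℝ := Real.exp (-(t / (4 * v0))) with hE
    have hEpos : 0 < E := Real.exp_pos _
    set h0 : ℝ → ℝ := fun x => S * E * ((8 * v0 / Real.exp 1) * Real.exp (-x ^ 2 / (8 * v0)))
      with hh0
    have hint8 : Integrable (fun x : ℝ => Real.exp (-x ^ 2 / (8 * v0))) volume := by
      have h := integrable_exp_shift (8 * v0) 0 (by positivity)
      simpa using h
    have h0_int : Integrable h0 volume := (hint8.const_mul _).const_mul _
    have hdom0 : ∀ x, p x * G x ≤ h0 x := by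
      intro x
      rw [hpdef x, hh0]
      simp only [sub_zero]
      have hGle0 : G x ≤ x ^ 2 * Real.exp ((x ^ 2 - t) / (4 * v0)) := by
        by_cases h : t ≤ x ^ 2
        · simp only [hG, if_pos h, sub_zero]
          have h1e : (1 : ℝ) ≤ Real.exp ((x ^ 2 - t) / (4 * v0)) := by
            rw [Real.one_le_exp_iff]
            exact div_nonneg (by linarith) (by positivity)
          nlinarith [sq_nonneg x]
        · simp only [hG, if_neg h, sub_zero]
          have hz : ((0 : ℝ)) ^ 2 = 0 := by norm_num
          rw [hz]
          positivity
      have comb : Real.exp (-x ^ 2 / (2 * v0)) * Real.exp ((x ^ 2 - t) / (4 * v0))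
          = E * Real.exp (-x ^ 2 / (4 * v0)) := by
        rw [hE, ← Real.exp_add, ← Real.exp_add]
        congr 1; field_simp; ring
      have step1 : Real.exp (-x ^ 2 / (2 * v0)) * G x
          ≤ E * (x ^ 2 * Real.exp (-x ^ 2 / (4 * v0))) := by
        calc Real.exp (-x ^ 2 / (2 * v0)) * G x
            ≤ Real.exp (-x ^ 2 / (2 * v0)) * (x ^ 2 * Real.exp ((x ^ 2 - t) / (4 * v0))) :=
              mul_le_mul_of_nonneg_left hGle0 (Real.exp_nonneg _)
          _ = (Real.exp (-x ^ 2 / (2 * v0)) * Real.exp ((x ^ 2 - t) / (4 * v0))) * x ^ 2 := by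
              ring
          _ = E * (x ^ 2 * Real.exp (-x ^ 2 / (4 * v0))) := by rw [comb]; ring
      have step2 : x ^ 2 * Real.exp (-x ^ 2 / (4 * v0))
          ≤ (8 * v0 / Real.exp 1) * Real.exp (-x ^ 2 / (8 * v0)) := by
        have h := aux_sq_exp (2 * v0) x (by positivity)
        rw [show (2 : ℝ) * (2 * v0) = 4 * v0 by ring,
          show (4 : ℝ) * (2 * v0) = 8 * v0 by ring] at h
        exact h
      calc S * Real.exp (-x ^ 2 / (2 * v0)) * G x
          = S * (Real.exp (-x ^ 2 / (2 * v0)) * G x) := by ring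
        _ ≤ S * (E * (x ^ 2 * Real.exp (-x ^ 2 / (4 * v0)))) :=
            mul_le_mul_of_nonneg_left step1 hSpos.le
        _ ≤ S * (E * ((8 * v0 / Real.exp 1) * Real.exp (-x ^ 2 / (8 * v0)))) :=
            mul_le_mul_of_nonneg_left (mul_le_mul_of_nonneg_left step2 hEpos.le) hSpos.le
        _ = S * E * ((8 * v0 / Real.exp 1) * Real.exp (-x ^ 2 / (8 * v0))) := by ring
    have h0_val : ∫ x, h0 x = S * E * ((8 * v0 / Real.exp 1) * Real.sqrt (π * (8 * v0))) := by
      rw [hh0, integral_const_mul, integral_const_mul]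
      have h := integral_exp_shift (8 * v0) 0 (by positivity)
      simp only [sub_zero] at h
      rw [h]
    have h0_le : ∫ x, h0 x ≤ 6 * v0 * E := by
      rw [h0_val]
      have r1 : Real.sqrt (π * (8 * v0)) = 2 * Real.sqrt (2 * π * v0) := by
        rw [show π * (8 * v0) = 2 ^ 2 * (2 * π * v0) by ring, Real.sqrt_mul (by norm_num),
          Real.sqrt_sq (by norm_num)]
      rw [r1]
      have hexp9 := Real.exp_one_gt_d9
      have key : S * ((8 * v0 / Real.exp 1) * (2 * Real.sqrt (2 * π * v0))) ≤ 6 * v0 := by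
        have e1 : S * ((8 * v0 / Real.exp 1) * (2 * Real.sqrt (2 * π * v0)))
            = (16 * v0 / Real.exp 1) * (S * Real.sqrt (2 * π * v0)) := by ring
        rw [e1, hSsqrt, mul_one, div_le_iff₀ (Real.exp_pos 1)]
        nlinarith
      calc S * E * ((8 * v0 / Real.exp 1) * (2 * Real.sqrt (2 * π * v0)))
          = (S * ((8 * v0 / Real.exp 1) * (2 * Real.sqrt (2 * π * v0)))) * E := by ring
        _ ≤ 6 * v0 * E := mul_le_mul_of_nonneg_right key hEpos.le
    calc ∫ x, p x * G x ≤ ∫ x, h0 x :=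
          integral_mono_of_nonneg (Filter.Eventually.of_forall fun x =>
            mul_nonneg (hpnn x) (hGnn x)) h0_int (Filter.Eventually.of_forall hdom0)
      _ ≤ 6 * v0 * E := h0_le


set_option maxHeartbeats 2000000 in
/-- Thresholding estimator for an `s`-sparse Gaussian mean: there are constants `L ≥ 1`, `C > 0`
such that for all `d ≥ 2`, `s ≥ 1`, `m, n ≥ 1`, `σ > 0`, `1 ≤ α ≤ d/s`, and `s`-sparse
`θ ∈ ℝ^d`, if the coordinates of `X̄` are independent with `X̄ᵢ ~ N(θᵢ, ασ²/(L m n log d))`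
and `θ̂ᵢ = X̄ᵢ` when `X̄ᵢ² ≥ ασ²/(mn)` and `0` otherwise, then
`E[Σᵢ (θ̂ᵢ - θᵢ)²] ≤ C α s σ²/(mn)`. -/
theorem stmt_4 :
    ∃ L : ℝ, 1 ≤ L ∧ ∃ C : ℝ, 0 < C ∧
      ∀ (d s m n : ℕ), 2 ≤ d → 1 ≤ s → 1 ≤ m → 1 ≤ n →
      ∀ σ : ℝ, 0 < σ →
      ∀ α : ℝ, 1 ≤ α → α ≤ (d : ℝ) / (s : ℝ) →
      ∀ θ : Fin d → ℝ, (Finset.univ.filter (fun i => θ i ≠ 0)).card ≤ s →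
      ∀ (Ω : Type) (_ : MeasurableSpace Ω) (μ : Measure Ω), IsProbabilityMeasure μ →
      ∀ Xbar : Fin d → Ω → ℝ, (∀ i, Measurable (Xbar i)) →
        iIndepFun Xbar μ →
        (∀ i, μ.map (Xbar i)
          = gaussianReal (θ i) ((α * σ ^ 2 / (L * m * n * Real.log d)).toNNReal)) →
        ∫ ω, ∑ i, ((if α * σ ^ 2 / (m * n) ≤ (Xbar i ω) ^ 2 then Xbar i ω else 0) - θ i) ^ 2 ∂μ
          ≤ C * α * s * σ ^ 2 / (m * n) := by
  refine ⟨8, by norm_num, 10, by norm_num, ?_⟩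
  intro d s m n hd hs hm hn σ hσ α hα hαd θ hθ Ω mΩ μ hμ Xbar hX hindep hmap
  have hm0 : (0 : ℝ) < m := by exact_mod_cast hm
  have hn0 : (0 : ℝ) < n := by exact_mod_cast hn
  have hd1 : (1 : ℝ) < d := by exact_mod_cast lt_of_lt_of_le one_lt_two hd
  have hlogd : 0 < Real.log d := Real.log_pos hd1
  have hα0 : 0 < α := lt_of_lt_of_le one_pos hα
  set t : ℝ := α * σ ^ 2 / (↑m * ↑n) with htdef
  set v0 : ℝ := α * σ ^ 2 / (8 * ↑m * ↑n * Real.log ↑d) with hv0def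
  have ht : 0 < t := by rw [htdef]; positivity
  have hv : 0 < v0 := by rw [hv0def]; positivity
  have hrel : t = 8 * Real.log ↑d * v0 := by
    rw [htdef, hv0def]; field_simp
  have hlog2 : Real.log 2 ≤ Real.log d :=
    Real.log_le_log (by norm_num) (by exact_mod_cast hd)
  have hlog2' : (0.6931471803 : ℝ) < Real.log 2 := Real.log_two_gt_d9
  have hexp : Real.exp (-(t / (4 * v0))) = (((d : ℝ)) ^ 2)⁻¹ := by
    have harg : t / (4 * v0) = 2 * Real.log d := by
      rw [hrel]; field_simp; ring
    rw [harg, show (2 : ℝ) * Real.log d = Real.log ((d : ℝ) ^ 2) by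
        rw [Real.log_pow]; norm_num,
      Real.exp_neg, Real.exp_log (by positivity)]
  -- per-coordinate facts
  have hci : ∀ i : Fin d,
      Integrable (fun x => ((if t ≤ x ^ 2 then x else 0) - θ i) ^ 2)
        (gaussianReal (θ i) v0.toNNReal) ∧
      (∫ x, ((if t ≤ x ^ 2 then x else 0) - θ i) ^ 2 ∂(gaussianReal (θ i) v0.toNNReal)
          ≤ 6 * v0 + 2 * t) ∧
      (θ i = 0 → ∫ x, ((if t ≤ x ^ 2 then x else 0) - θ i) ^ 2
          ∂(gaussianReal (θ i) v0.toNNReal) ≤ 6 * v0 * Real.exp (-(t / (4 * v0)))) :=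
    fun i => coord_bound (θ i) t v0 hv ht
  have hGm : ∀ i : Fin d,
      Measurable (fun x : ℝ => ((if t ≤ x ^ 2 then x else 0) - θ i) ^ 2) := by
    intro i
    apply Measurable.pow_const
    apply Measurable.sub _ measurable_const
    exact Measurable.ite (measurableSet_le measurable_const (measurable_id.pow_const 2))
      measurable_id measurable_const
  have hFint : ∀ i : Fin d,
      Integrable (fun ω => ((if t ≤ (Xbar i ω) ^ 2 then Xbar i ω else 0) - θ i) ^ 2) μ := by
    intro i
    have h1 : Integrable (fun x => ((if t ≤ x ^ 2 then x else 0) - θ i) ^ 2)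
        (μ.map (Xbar i)) := by
      rw [hmap i]; exact (hci i).1
    have := (integrable_map_measure ((hGm i).aestronglyMeasurable) (hX i).aemeasurable).mp h1
    exact this
  have hFval : ∀ i : Fin d,
      ∫ ω, ((if t ≤ (Xbar i ω) ^ 2 then Xbar i ω else 0) - θ i) ^ 2 ∂μ
        = ∫ x, ((if t ≤ x ^ 2 then x else 0) - θ i) ^ 2 ∂(gaussianReal (θ i) v0.toNNReal) := by
    intro i
    rw [← hmap i, integral_map (hX i).aemeasurable ((hGm i).aestronglyMeasurable)]
  rw [integral_finset_sum Finset.univ (fun i _ => hFint i)]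
  have hIb : ∀ i : Fin d,
      ∫ ω, ((if t ≤ (Xbar i ω) ^ 2 then Xbar i ω else 0) - θ i) ^ 2 ∂μ
        ≤ if θ i = 0 then 6 * v0 * (((d : ℝ)) ^ 2)⁻¹ else 6 * v0 + 2 * t := by
    intro i
    rw [hFval i]
    by_cases h : θ i = 0
    · rw [if_pos h, ← hexp]
      exact (hci i).2.2 h
    · rw [if_neg h]
      exact (hci i).2.1
  have hsum1 : ∑ i : Fin d, ∫ ω, ((if t ≤ (Xbar i ω) ^ 2 then Xbar i ω else 0) - θ i) ^ 2 ∂μ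
      ≤ ∑ i : Fin d, (if θ i = 0 then 6 * v0 * (((d : ℝ)) ^ 2)⁻¹ else 6 * v0 + 2 * t) :=
    Finset.sum_le_sum fun i _ => hIb i
  have hz : (0 : ℝ) ≤ 6 * v0 * (((d : ℝ)) ^ 2)⁻¹ := by positivity
  have hw : (0 : ℝ) ≤ 6 * v0 + 2 * t := by positivity
  have hsum2 : ∑ i : Fin d, (if θ i = 0 then 6 * v0 * (((d : ℝ)) ^ 2)⁻¹ else 6 * v0 + 2 * t)
      ≤ (d : ℝ) * (6 * v0 * (((d : ℝ)) ^ 2)⁻¹) + (s : ℝ) * (6 * v0 + 2 * t) := by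
    rw [Finset.sum_ite]
    simp only [Finset.sum_const, nsmul_eq_mul]
    have hc1 : ((Finset.univ.filter (fun i : Fin d => θ i = 0)).card : ℝ) ≤ (d : ℝ) := by
      have := Finset.card_filter_le (Finset.univ : Finset (Fin d)) (fun i => θ i = 0)
      have h2 : (Finset.univ : Finset (Fin d)).card = d := by simp
      exact_mod_cast h2 ▸ this
    have hc2 : ((Finset.univ.filter (fun i : Fin d => ¬ θ i = 0)).card : ℝ) ≤ (s : ℝ) := by
      exact_mod_cast hθ
    have := add_le_add (mul_le_mul_of_nonneg_right hc1 hz) (mul_le_mul_of_nonneg_right hc2 hw)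
    exact this
  have hs1 : (1 : ℝ) ≤ (s : ℝ) := by exact_mod_cast hs
  have hd2 : (2 : ℝ) ≤ (d : ℝ) := by exact_mod_cast hd
  have hd0 : (0 : ℝ) < (d : ℝ) := by linarith
  have hfinal : (d : ℝ) * (6 * v0 * (((d : ℝ)) ^ 2)⁻¹) + (s : ℝ) * (6 * v0 + 2 * t)
      ≤ 10 * (s : ℝ) * t := by
    have e0 : (d : ℝ) * (6 * v0 * (((d : ℝ)) ^ 2)⁻¹) = 6 * v0 / (d : ℝ) := by
      field_simp
    rw [e0]
    have e2 : 6 * v0 ≤ 2 * t := by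
      rw [hrel]; nlinarith
    have e3 : 6 * v0 / (d : ℝ) ≤ 3 * v0 := by
      rw [div_le_iff₀ hd0]; nlinarith
    have e4 : (s : ℝ) * (6 * v0 + 2 * t) ≤ (s : ℝ) * (4 * t) :=
      mul_le_mul_of_nonneg_left (by linarith) (by positivity)
    have e5 : t ≤ (s : ℝ) * t := le_mul_of_one_le_left ht.le hs1
    have e6 : 0 < (s : ℝ) * t := by positivity
    nlinarith
  have hgoal : 10 * α * (s : ℝ) * σ ^ 2 / (↑m * ↑n) = 10 * (s : ℝ) * t := by
    rw [htdef]; ring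
  calc ∑ i : Fin d, ∫ ω, ((if t ≤ (Xbar i ω) ^ 2 then Xbar i ω else 0) - θ i) ^ 2 ∂μ
      ≤ (d : ℝ) * (6 * v0 * (((d : ℝ)) ^ 2)⁻¹) + (s : ℝ) * (6 * v0 + 2 * t) :=
        hsum1.trans hsum2
    _ ≤ 10 * (s : ℝ) * t := hfinal
    _ = 10 * α * (s : ℝ) * σ ^ 2 / (↑m * ↑n) := hgoal.symm
end

section
/- For every θ₀ ∈ ℝ, every a > 0, and every τ with 0 < τ ≤ a, if X is a random variable with distribution N(θ₀, τ²), then θ₀² · P(|X| < a) ≤ 4a². -/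
open MeasureTheory ProbabilityTheory Real

/-- If `X ~ N(θ₀, τ²)` with `0 < τ ≤ a`, then `θ₀² · P(|X| < a) ≤ 4a²`. -/
theorem stmt_6 (θ₀ a τ : ℝ) (ha : 0 < a) (hτ : 0 < τ) (hτa : τ ≤ a) :
    θ₀ ^ 2 * ((gaussianReal θ₀ ((τ ^ 2).toNNReal)) {x : ℝ | |x| < a}).toReal ≤ 4 * a ^ 2 := by
  set v : NNReal := (τ ^ 2).toNNReal with hvdef
  have hv0 : (v : ℝ) = τ ^ 2 := Real.coe_toNNReal _ (by positivity)
  have hvne : v ≠ 0 := by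
    intro h
    rw [h] at hv0
    simp at hv0
    nlinarith
  by_cases hcase : |θ₀| ≤ 2 * a
  · -- easy case: θ₀² ≤ 4a², probability ≤ 1
    have hP : ((gaussianReal θ₀ v) {x : ℝ | |x| < a}).toReal ≤ 1 := by
      have := prob_le_one (μ := gaussianReal θ₀ v) (s := {x : ℝ | |x| < a})
      calc ((gaussianReal θ₀ v) {x : ℝ | |x| < a}).toReal
          ≤ (1 : ENNReal).toReal := ENNReal.toReal_mono (by simp) this
        _ = 1 := by simp
    have h1 : θ₀ ^ 2 ≤ 4 * a ^ 2 := by nlinarith [abs_nonneg θ₀, sq_abs θ₀]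
    have h0 : 0 ≤ ((gaussianReal θ₀ v) {x : ℝ | |x| < a}).toReal := ENNReal.toReal_nonneg
    nlinarith
  · push_neg at hcase
    -- hcase : 2 * a < |θ₀|
    have hsetEq : {x : ℝ | |x| < a} = Set.Ioo (-a) a := by
      ext x; simp [abs_lt, Set.mem_Ioo]
    set C : ℝ := (√(2 * π * v))⁻¹ * rexp (- θ₀ ^ 2 / (8 * τ ^ 2)) with hC
    have hCpos : 0 < C := by
      have : (0 : ℝ) < (v : ℝ) := by rw [hv0]; positivity
      apply mul_pos
      · rw [inv_pos]; apply Real.sqrt_pos.2; positivity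
      · exact Real.exp_pos _
    -- pointwise bound of the pdf on Ioo (-a) a
    have hpdf : ∀ x ∈ Set.Ioo (-a) a, gaussianPDFReal θ₀ v x ≤ C := by
      intro x hx
      rw [gaussianPDFReal, hC]
      have hxa : |x| < a := by rw [abs_lt]; exact ⟨hx.1, hx.2⟩
      have hdist : |θ₀| / 2 ≤ |x - θ₀| := by
        have h1 : |θ₀| - |x| ≤ |x - θ₀| := by
          have := abs_sub_abs_le_abs_sub θ₀ x
          rw [abs_sub_comm] at this; linarith
        linarith
      have hsq : θ₀ ^ 2 / 4 ≤ (x - θ₀) ^ 2 := by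
        have h2 : (|θ₀| / 2) ^ 2 ≤ |x - θ₀| ^ 2 := by
          apply sq_le_sq' <;> nlinarith [abs_nonneg θ₀, abs_nonneg (x - θ₀)]
        rw [sq_abs] at h2
        calc θ₀ ^ 2 / 4 = (|θ₀| / 2) ^ 2 := by rw [div_pow, sq_abs]; ring
          _ ≤ (x - θ₀) ^ 2 := h2
      apply mul_le_mul_of_nonneg_left _ (inv_nonneg.2 (Real.sqrt_nonneg _))
      apply Real.exp_le_exp.2
      rw [hv0, div_le_div_iff₀ (by positivity) (by positivity)]
      nlinarith [sq_nonneg τ]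
    -- measure as integral
    have hmeas : ((gaussianReal θ₀ v) {x : ℝ | |x| < a}).toReal
        = ∫ x in Set.Ioo (-a) a, gaussianPDFReal θ₀ v x := by
      rw [hsetEq, gaussianReal_apply_eq_integral _ hvne,
        ENNReal.toReal_ofReal (integral_nonneg fun x => gaussianPDFReal_nonneg _ _ _)]
    have hIoo_lt : volume (Set.Ioo (-a) a) < ⊤ := by
      rw [Real.volume_Ioo]; exact ENNReal.ofReal_lt_top
    have hint : ∫ x in Set.Ioo (-a) a, gaussianPDFReal θ₀ v x ≤ 2 * a * C := by
      calc ∫ x in Set.Ioo (-a) a, gaussianPDFReal θ₀ v x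
          ≤ ∫ _x in Set.Ioo (-a) a, C := by
            apply setIntegral_mono_on
            · exact (integrable_gaussianPDFReal _ _).restrict
            · exact integrableOn_const hIoo_lt.ne
            · exact measurableSet_Ioo
            · exact hpdf
        _ = (volume (Set.Ioo (-a) a)).toReal * C := by
            rw [setIntegral_const]; simp [smul_eq_mul]; left; rw [ENNReal.toReal_ofReal (by linarith)]; exact max_eq_left (by linarith)
        _ = 2 * a * C := by
            rw [Real.volume_Ioo, ENNReal.toReal_ofReal (by linarith)]
            ring
    -- key scalar inequality: θ₀² * exp(-θ₀²/(8τ²)) ≤ 4τ²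
    have hkey : θ₀ ^ 2 * rexp (- θ₀ ^ 2 / (8 * τ ^ 2)) ≤ 4 * τ ^ 2 := by
      set u : ℝ := θ₀ ^ 2 / (8 * τ ^ 2) with hu
      have hu0 : 0 < u := by
        apply div_pos
        · nlinarith [abs_nonneg θ₀, sq_abs θ₀]
        · positivity
      have hexp : Real.exp 1 * u ≤ rexp u := by
        have := Real.add_one_le_exp (u - 1)
        calc Real.exp 1 * u = Real.exp 1 * ((u - 1) + 1) := by ring
          _ ≤ Real.exp 1 * rexp (u - 1) := by
              apply mul_le_mul_of_nonneg_left (by linarith) (Real.exp_pos 1).le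
          _ = rexp u := by rw [← Real.exp_add]; ring_nf
      have hexpneg : rexp (-u) ≤ 1 / (Real.exp 1 * u) := by
        rw [Real.exp_neg, one_div]
        apply inv_anti₀ (by positivity) hexp
      have he : (2 : ℝ) ≤ Real.exp 1 := by
        have := Real.add_one_le_exp (1 : ℝ); linarith
      calc θ₀ ^ 2 * rexp (- θ₀ ^ 2 / (8 * τ ^ 2))
          = θ₀ ^ 2 * rexp (-u) := by rw [hu]; ring_nf
        _ ≤ θ₀ ^ 2 * (1 / (Real.exp 1 * u)) := by
            apply mul_le_mul_of_nonneg_left hexpneg (sq_nonneg _)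
        _ = 8 * τ ^ 2 / Real.exp 1 := by
            have hθ : θ₀ ≠ 0 := by
              intro h; rw [h, abs_zero] at hcase; linarith
            rw [hu]; field_simp
        _ ≤ 4 * τ ^ 2 := by
            rw [div_le_iff₀ (Real.exp_pos 1)]
            nlinarith [sq_nonneg τ]
    -- √(2πv) ≥ 2τ
    have hsqrt : 2 * τ ≤ √(2 * π * v) := by
      rw [hv0]
      have h4 : (2 * τ) ^ 2 ≤ 2 * π * τ ^ 2 := by nlinarith [Real.pi_gt_three, sq_nonneg τ]
      calc 2 * τ = √((2 * τ) ^ 2) := by rw [Real.sqrt_sq (by linarith)]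
        _ ≤ √(2 * π * τ ^ 2) := Real.sqrt_le_sqrt h4
    have hsqrtpos : 0 < √(2 * π * v) := lt_of_lt_of_le (by linarith) hsqrt
    -- put it all together
    calc θ₀ ^ 2 * ((gaussianReal θ₀ v) {x : ℝ | |x| < a}).toReal
        ≤ θ₀ ^ 2 * (2 * a * C) := by
          rw [hmeas]
          exact mul_le_mul_of_nonneg_left hint (sq_nonneg _)
      _ = 2 * a * (θ₀ ^ 2 * rexp (- θ₀ ^ 2 / (8 * τ ^ 2))) / √(2 * π * v) := by
          rw [hC]; field_simp
      _ ≤ 2 * a * (4 * τ ^ 2) / (2 * τ) := by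
          apply div_le_div₀ (by positivity) _ (by linarith) hsqrt
          apply mul_le_mul_of_nonneg_left hkey (by linarith)
      _ = 4 * a * τ := by field_simp
      _ ≤ 4 * a ^ 2 := by nlinarith
end

section
/- For every θ₀ ∈ ℝ, every a > 0, and every τ with 0 < τ ≤ a, if X is a random variable with distribution N(θ₀, τ²) and θ̂ is defined by θ̂ = X if |X| ≥ a and θ̂ = 0 otherwise, then E[(θ̂ - θ₀)²] ≤ 5a². -/
open MeasureTheory ProbabilityTheory Real
open scoped NNReal ENNReal


lemma int_sq_exp {b : ℝ} (hb : 0 < b) :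
    ∫ x : ℝ, x ^ 2 * Real.exp (-b * x ^ 2) = Real.sqrt π / (2 * b * Real.sqrt b) := by
  have h := integral_comp_abs (f := fun x : ℝ => x ^ 2 * Real.exp (-b * x ^ 2))
  simp only [sq_abs] at h
  rw [h]
  have h2 : (∫ x in Set.Ioi (0:ℝ), x ^ 2 * Real.exp (-b * x ^ 2))
      = ∫ x in Set.Ioi (0:ℝ), x ^ (2:ℝ) * Real.exp (-b * x ^ (2:ℝ)) := by
    refine setIntegral_congr_fun measurableSet_Ioi (fun x hx => ?_)
    norm_num [Real.rpow_natCast]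
  rw [h2, integral_rpow_mul_exp_neg_mul_rpow (by norm_num) (by norm_num) hb]
  have hg : Real.Gamma ((2 + 1) / 2) = Real.sqrt π / 2 := by
    rw [show ((2:ℝ) + 1)/2 = 1/2 + 1 by norm_num, Real.Gamma_add_one (by norm_num),
      Real.Gamma_one_half_eq]
    ring
  have hb32 : b ^ (-(2 + 1) / 2 : ℝ) = (b * Real.sqrt b)⁻¹ := by
    rw [show (-(2 + 1) / 2 : ℝ) = -(1 + 1/2) by norm_num, Real.rpow_neg hb.le,
      Real.rpow_add hb, Real.rpow_one, ← Real.sqrt_eq_rpow]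
  rw [hg, hb32]
  have hsb : (0:ℝ) < Real.sqrt b := Real.sqrt_pos.mpr hb
  field_simp



lemma pdf_shift_eq (m : ℝ) (V : ℝ≥0) (y : ℝ) :
    gaussianPDFReal m V (y + m) * y ^ 2
      = (Real.sqrt (2 * π * V))⁻¹ * (y ^ 2 * Real.exp (-(2 * (V:ℝ))⁻¹ * y ^ 2)) := by
  simp only [gaussianPDFReal]
  rw [show y + m - m = y by ring, show -(y:ℝ)^2 / (2 * (V:ℝ)) = -(2 * (V:ℝ))⁻¹ * y ^ 2 by ring]
  ring

lemma integrable_shift (m : ℝ) {V : ℝ≥0} (hV : V ≠ 0) :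
    Integrable (fun y : ℝ => gaussianPDFReal m V (y + m) * y ^ 2) := by
  have hv : (0:ℝ) < V := NNReal.coe_pos.mpr (pos_iff_ne_zero.mpr hV)
  have hb : (0:ℝ) < (2 * (V:ℝ))⁻¹ := by positivity
  simp only [pdf_shift_eq]
  have h := (integrable_rpow_mul_exp_neg_mul_sq hb (s := 2) (by norm_num)).const_mul
    ((Real.sqrt (2 * π * V))⁻¹)
  refine h.congr (Filter.Eventually.of_forall fun y => ?_)
  norm_num [Real.rpow_natCast]

lemma integrable_sq_gaussian (m : ℝ) {V : ℝ≥0} (hV : V ≠ 0) :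
    Integrable (fun x => (x - m) ^ 2) (gaussianReal m V) := by
  rw [gaussianReal_of_var_ne_zero m hV, gaussianPDF_def]
  have hmeas : Measurable fun x => (gaussianPDFReal m V x).toNNReal :=
    (measurable_gaussianPDFReal m V).real_toNNReal
  simp only [ENNReal.ofReal]
  rw [integrable_withDensity_iff_integrable_coe_smul hmeas]
  have : Integrable (fun x : ℝ => gaussianPDFReal m V x * (x - m) ^ 2) := by
    have h := (integrable_shift m hV).comp_sub_right (g := m)
    refine h.congr (Filter.Eventually.of_forall fun x => ?_)
    simp [sub_add_cancel]
  refine this.congr (Filter.Eventually.of_forall fun x => ?_)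
  simp [NNReal.smul_def, Real.coe_toNNReal _ (gaussianPDFReal_nonneg m V x)]

lemma moment2_gaussian (m : ℝ) {V : ℝ≥0} (hV : V ≠ 0) :
    ∫ x, (x - m) ^ 2 ∂(gaussianReal m V) = V := by
  have hv : (0:ℝ) < V := NNReal.coe_pos.mpr (pos_iff_ne_zero.mpr hV)
  rw [gaussianReal_of_var_ne_zero m hV, gaussianPDF_def]
  have hmeas : Measurable fun x => (gaussianPDFReal m V x).toNNReal :=
    (measurable_gaussianPDFReal m V).real_toNNReal
  simp only [ENNReal.ofReal]
  rw [integral_withDensity_eq_integral_smul hmeas]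
  have h1 : (∫ x : ℝ, (gaussianPDFReal m V x).toNNReal • (x - m) ^ 2)
      = ∫ x : ℝ, gaussianPDFReal m V x * (x - m) ^ 2 := by
    congr 1; funext x
    simp [NNReal.smul_def, Real.coe_toNNReal _ (gaussianPDFReal_nonneg m V x)]
  rw [h1]
  have h2 : (∫ x : ℝ, gaussianPDFReal m V x * (x - m) ^ 2)
      = ∫ y : ℝ, gaussianPDFReal m V (y + m) * y ^ 2 := by
    rw [← integral_sub_right_eq_self (fun y : ℝ => gaussianPDFReal m V (y + m) * y ^ 2) m]
    congr 1; funext x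
    simp [sub_add_cancel]
  rw [h2]
  simp only [pdf_shift_eq]
  rw [integral_const_mul, int_sq_exp (by positivity)]
  -- now pure algebra
  have h2v : (0:ℝ) < 2 * V := by positivity
  have hs : Real.sqrt (2 * (V:ℝ)) ^ 2 = 2 * V := Real.sq_sqrt h2v.le
  have hspos : (0:ℝ) < Real.sqrt (2 * V) := Real.sqrt_pos.mpr h2v
  have hsqrtpi : (0:ℝ) < Real.sqrt π := Real.sqrt_pos.mpr pi_pos
  rw [show 2 * π * (V:ℝ) = π * (2 * V) by ring, Real.sqrt_mul pi_pos.le,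
    Real.sqrt_inv]
  field_simp




/-- If `X ~ N(θ₀, τ²)` with `0 < τ ≤ a` and `θ̂ = X` if `|X| ≥ a`, `θ̂ = 0` otherwise, then
`E[(θ̂ - θ₀)²] ≤ 5a²`. -/
theorem stmt_12 (θ₀ a τ : ℝ) (ha : 0 < a) (hτ : 0 < τ) (hτa : τ ≤ a) :
    ∫ x, ((if a ≤ |x| then x else 0) - θ₀) ^ 2 ∂(gaussianReal θ₀ ((τ ^ 2).toNNReal))
      ≤ 5 * a ^ 2 := by
  set V : ℝ≥0 := (τ ^ 2).toNNReal with hVdef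
  have hV : V ≠ 0 := by
    simp [hVdef, Real.toNNReal_eq_zero, not_le]
    positivity
  have hVc : (V:ℝ) = τ ^ 2 := Real.coe_toNNReal _ (by positivity)
  set μ := gaussianReal θ₀ V with hμ
  have hint : Integrable (fun x => (x - θ₀) ^ 2) μ := integrable_sq_gaussian θ₀ hV
  have hmom : ∫ x, (x - θ₀) ^ 2 ∂μ = τ ^ 2 := by rw [moment2_gaussian θ₀ hV, hVc]
  have hτ2 : τ ^ 2 ≤ a ^ 2 := by nlinarith
  have hnn : 0 ≤ᵐ[μ] fun x => ((if a ≤ |x| then x else 0) - θ₀) ^ 2 :=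
    Filter.Eventually.of_forall fun x => sq_nonneg _
  by_cases hθ : |θ₀| ≤ 2 * a
  · have hle : ∀ x, ((if a ≤ |x| then x else 0) - θ₀) ^ 2 ≤ (x - θ₀) ^ 2 + (2 * a) ^ 2 := by
      intro x
      split_ifs with h
      · nlinarith [sq_nonneg a]
      · have h1 : θ₀ ^ 2 ≤ (2 * a) ^ 2 := by nlinarith [sq_abs θ₀, abs_nonneg θ₀]
        nlinarith [sq_nonneg (x - θ₀)]
    calc ∫ x, ((if a ≤ |x| then x else 0) - θ₀) ^ 2 ∂μ
        ≤ ∫ x, ((x - θ₀) ^ 2 + (2 * a) ^ 2) ∂μ := by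
          refine integral_mono_of_nonneg hnn (hint.add (integrable_const _))
            (Filter.Eventually.of_forall hle)
      _ = τ ^ 2 + (2 * a) ^ 2 := by
          rw [integral_add hint (integrable_const _), hmom, integral_const]
          simp
      _ ≤ 5 * a ^ 2 := by nlinarith
  · push_neg at hθ
    have hle : ∀ x, ((if a ≤ |x| then x else 0) - θ₀) ^ 2 ≤ 4 * (x - θ₀) ^ 2 := by
      intro x
      split_ifs with h
      · nlinarith [sq_nonneg (x - θ₀)]
      · push_neg at h
        rcases abs_lt.mp h with ⟨hx1, hx2⟩
        rcases abs_cases θ₀ with ⟨he, _⟩ | ⟨he, _⟩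
        · nlinarith
        · nlinarith
    calc ∫ x, ((if a ≤ |x| then x else 0) - θ₀) ^ 2 ∂μ
        ≤ ∫ x, 4 * (x - θ₀) ^ 2 ∂μ := by
          refine integral_mono_of_nonneg hnn (hint.const_mul 4)
            (Filter.Eventually.of_forall hle)
      _ = 4 * τ ^ 2 := by rw [integral_const_mul, hmom]
      _ ≤ 5 * a ^ 2 := by nlinarith
end

section
/- Let δ > 0 and let V be a random variable with distribution N(0, δ²). Let θ̂ be any real-valued random variable defined on the same probability space such that E[(θ̂ - V)²] ≤ δ²/100. Then P( θ̂ · V > 0 ) ≥ 13/20. -/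
open MeasureTheory ProbabilityTheory

open Real
open scoped NNReal ENNReal

lemma aux_exp_neg_le {y : ℝ} (hy : 0 ≤ y) : Real.exp (-y) ≤ 1 - y + y^2/2 := by
  have h1 : 1 + y + y^2/2 ≤ Real.exp y := Real.quadratic_le_exp_of_nonneg hy
  have hpos : (0:ℝ) < 1 + y + y^2/2 := by positivity
  have h3 : Real.exp (-y) ≤ (1 + y + y^2/2)⁻¹ := by
    rw [Real.exp_neg y]; exact inv_anti₀ hpos h1
  have h4 : (1 + y + y^2/2)⁻¹ ≤ 1 - y + y^2/2 := by
    rw [inv_le_iff_one_le_mul₀ hpos]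
    nlinarith [sq_nonneg (y^2)]
  linarith

set_option maxHeartbeats 1000000 in
lemma aux_gauss_bound (δ : ℝ) (hδ : 0 < δ) :
    ((gaussianReal 0 ((δ^2).toNNReal)) (Set.Ioc (-(3*δ/10)) (3*δ/10))).toReal ≤ 43/180 := by
  set t : ℝ := 3*δ/10 with ht
  have htpos : 0 < t := by positivity
  have hvcoe : (((δ^2).toNNReal : ℝ≥0) : ℝ) = δ^2 := Real.coe_toNNReal _ (sq_nonneg δ)
  have hv : (δ^2).toNNReal ≠ 0 := by
    simp only [ne_eq, Real.toNNReal_eq_zero, not_le]; positivity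
  rw [gaussianReal_apply_eq_integral 0 hv]
  have hpi : (3.14:ℝ) < π := by
    have := Real.pi_gt_d6; linarith
  have hsqrt : Real.sqrt (2 * π * ((δ^2).toNNReal : ℝ≥0)) = δ * Real.sqrt (2*π) := by
    rw [hvcoe]
    rw [show 2 * π * δ^2 = δ^2 * (2*π) by ring, Real.sqrt_mul (sq_nonneg δ),
      Real.sqrt_sq hδ.le]
  have hpdf_bound : ∀ x : ℝ, gaussianPDFReal 0 ((δ^2).toNNReal) x
      ≤ (δ * Real.sqrt (2*π))⁻¹ * (1 - x^2/(2*δ^2) + (x^2/(2*δ^2))^2/2) := by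
    intro x
    rw [gaussianPDFReal, hsqrt]
    have heq : -(x - 0)^2 / (2 * (((δ^2).toNNReal : ℝ≥0) : ℝ)) = -(x^2/(2*δ^2)) := by
      rw [hvcoe]; ring
    rw [heq]
    exact mul_le_mul_of_nonneg_left (aux_exp_neg_le (by positivity)) (by positivity)
  -- integral bound
  have hIoc : ∫ x in Set.Ioc (-t) t, gaussianPDFReal 0 ((δ^2).toNNReal) x
      = ∫ x in (-t)..t, gaussianPDFReal 0 ((δ^2).toNNReal) x := by
    rw [intervalIntegral.integral_of_le (by linarith)]
  have hcont : Continuous (gaussianPDFReal 0 ((δ^2).toNNReal)) := by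
    rw [gaussianPDFReal_def]
    exact continuous_const.mul ((((continuous_id.sub continuous_const).pow 2).neg).div_const _).rexp
  have hmono : ∫ x in (-t)..t, gaussianPDFReal 0 ((δ^2).toNNReal) x
      ≤ ∫ x in (-t)..t, (δ * Real.sqrt (2*π))⁻¹ * (1 - x^2/(2*δ^2) + (x^2/(2*δ^2))^2/2) := by
    apply intervalIntegral.integral_mono_on (by linarith)
    · exact hcont.intervalIntegrable _ _
    · apply Continuous.intervalIntegrable
      exact (continuous_const.mul ((continuous_const.sub ((continuous_pow 2).div_const _)).add
        ((((continuous_pow 2).div_const _).pow 2).div_const _)))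
    · intro x _; exact hpdf_bound x
  have hcomp : ∫ x in (-t)..t, (δ * Real.sqrt (2*π))⁻¹ * (1 - x^2/(2*δ^2) + (x^2/(2*δ^2))^2/2)
      = (δ * Real.sqrt (2*π))⁻¹ * (2*t - t^3/(3*δ^2) + t^5/(20*δ^4)) := by
    rw [intervalIntegral.integral_const_mul]
    congr 1
    have hδ' : (δ:ℝ) ≠ 0 := ne_of_gt hδ
    have hrw : ∀ x : ℝ, 1 - x^2/(2*δ^2) + (x^2/(2*δ^2))^2/2
        = 1 + (-(2*δ^2)⁻¹) * x^2 + (8*δ^4)⁻¹ * x^4 := by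
      intro x
      field_simp
      ring
    have hi2 : IntervalIntegrable (fun x : ℝ => (-(2*δ^2)⁻¹) * x^2) volume (-t) t :=
      (Continuous.intervalIntegrable (continuous_const.mul (continuous_pow 2)) _ _)
    have hi4 : IntervalIntegrable (fun x : ℝ => (8*δ^4)⁻¹ * x^4) volume (-t) t :=
      (Continuous.intervalIntegrable (continuous_const.mul (continuous_pow 4)) _ _)
    have e2 : ∫ x in (-t)..t, x^2 = 2*t^3/3 := by
      rw [_root_.integral_pow]; ring
    have e4 : ∫ x in (-t)..t, x^4 = 2*t^5/5 := by
      rw [_root_.integral_pow]; ring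
    calc ∫ x in (-t)..t, (1 - x^2/(2*δ^2) + (x^2/(2*δ^2))^2/2)
        = ∫ x in (-t)..t, (1 + (-(2*δ^2)⁻¹) * x^2 + (8*δ^4)⁻¹ * x^4) :=
          intervalIntegral.integral_congr (fun x _ => hrw x)
      _ = (∫ x in (-t)..t, (1 + (-(2*δ^2)⁻¹) * x^2 : ℝ)) + ∫ x in (-t)..t, (8*δ^4)⁻¹ * x^4 :=
          intervalIntegral.integral_add (intervalIntegrable_const.add hi2) hi4
      _ = ((∫ x in (-t)..t, (1:ℝ)) + ∫ x in (-t)..t, (-(2*δ^2)⁻¹) * x^2)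
            + ∫ x in (-t)..t, (8*δ^4)⁻¹ * x^4 := by
          rw [intervalIntegral.integral_add intervalIntegrable_const hi2]
      _ = (t - -t) • (1:ℝ) + (-(2*δ^2)⁻¹) * (2*t^3/3) + (8*δ^4)⁻¹ * (2*t^5/5) := by
          rw [intervalIntegral.integral_const, intervalIntegral.integral_const_mul,
            intervalIntegral.integral_const_mul, e2, e4]
      _ = 2*t - t^3/(3*δ^2) + t^5/(20*δ^4) := by
          simp only [smul_eq_mul]
          field_simp
          ring
  have hval : (δ * Real.sqrt (2*π))⁻¹ * (2*t - t^3/(3*δ^2) + t^5/(20*δ^4)) ≤ 43/180 := by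
    have hsq : Real.sqrt (2*π) ≥ 2.474466 := by
      have h1 : (2.474466:ℝ)^2 ≤ 2*π := by nlinarith
      nlinarith [Real.sq_sqrt (by positivity : (0:ℝ) ≤ 2*π),
        Real.sqrt_nonneg (2*π)]
    have hpoly : 2*t - t^3/(3*δ^2) + t^5/(20*δ^4) = δ * 0.5911215 := by
      rw [ht]; field_simp; ring
    rw [hpoly]
    rw [inv_mul_le_iff₀ (by positivity)]
    have : δ * 0.5911215 ≤ δ * (Real.sqrt (2*π) * (43/180)) := by
      apply mul_le_mul_of_nonneg_left _ hδ.le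
      nlinarith
    linarith [this]
  have hnn : 0 ≤ ∫ x in Set.Ioc (-t) t, gaussianPDFReal 0 ((δ^2).toNNReal) x :=
    integral_nonneg (fun x => gaussianPDFReal_nonneg _ _ _)
  rw [ENNReal.toReal_ofReal hnn]
  calc _ = ∫ x in (-t)..t, gaussianPDFReal 0 ((δ^2).toNNReal) x := hIoc
    _ ≤ _ := hmono
    _ = _ := hcomp
    _ ≤ 43/180 := hval

/-- If `V ~ N(0, δ²)` and `θ̂` is a real random variable on the same space with
`E[(θ̂ - V)²] ≤ δ²/100`, then `P(θ̂·V > 0) ≥ 13/20`. -/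
theorem stmt_13 (δ : ℝ) (hδ : 0 < δ)
    {Ω : Type*} [MeasurableSpace Ω] (μ : Measure Ω) [IsProbabilityMeasure μ]
    (V : Ω → ℝ) (hmV : Measurable V)
    (hV : μ.map V = gaussianReal 0 ((δ ^ 2).toNNReal))
    (θhat : Ω → ℝ) (hmθ : Measurable θhat)
    (hint : Integrable (fun ω => (θhat ω - V ω) ^ 2) μ)
    (hloss : ∫ ω, (θhat ω - V ω) ^ 2 ∂μ ≤ δ ^ 2 / 100) :
    (μ {ω | 0 < θhat ω * V ω}).toReal ≥ 13 / 20 := by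

  set t : ℝ := 3*δ/10 with ht
  have htpos : 0 < t := by positivity
  set G : Set Ω := {ω | 0 < θhat ω * V ω} with hGdef
  set B : Set Ω := {ω | t^2 ≤ (θhat ω - V ω)^2} with hBdef
  set C : Set Ω := {ω | (V ω)^2 < t^2} with hCdef
  have hG : MeasurableSet G := measurableSet_lt measurable_const (hmθ.mul hmV)
  -- Markov
  have hMarkov : (μ B).toReal ≤ 1/9 := by
    have h : t^2 * (μ B).toReal ≤ ∫ ω, (θhat ω - V ω)^2 ∂μ := mul_meas_ge_le_integral_of_nonneg
      (ae_of_all μ (fun ω => sq_nonneg (θhat ω - V ω))) hint (t^2)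
    have ht2 : t^2 = 9*δ^2/100 := by rw [ht]; ring
    rw [ht2] at h
    have hδ2 : (0:ℝ) < δ^2 := by positivity
    nlinarith [h, hloss, hδ2]
  -- Gaussian anticoncentration
  have hCmeas : MeasurableSet {x : ℝ | x^2 < t^2} :=
    measurableSet_lt ((measurable_id.pow_const 2)) measurable_const
  have hCsub : {x : ℝ | x^2 < t^2} ⊆ Set.Ioc (-t) t := by
    intro x hx
    simp only [Set.mem_setOf_eq] at hx
    constructor <;> nlinarith
  have hGauss : (μ C).toReal ≤ 43/180 := by
    have hmap : μ C = (gaussianReal 0 ((δ^2).toNNReal)) {x : ℝ | x^2 < t^2} := by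
      rw [← hV, Measure.map_apply hmV hCmeas]
      rfl
    have hle : μ C ≤ (gaussianReal 0 ((δ^2).toNNReal)) (Set.Ioc (-t) t) := by
      rw [hmap]; exact measure_mono hCsub
    calc (μ C).toReal ≤ ((gaussianReal 0 ((δ^2).toNNReal)) (Set.Ioc (-t) t)).toReal :=
          ENNReal.toReal_mono (measure_ne_top _ _) hle
      _ ≤ 43/180 := aux_gauss_bound δ hδ
  -- inclusion
  have hsub : Gᶜ ⊆ B ∪ C := by
    intro ω hω
    simp only [hGdef, Set.mem_compl_iff, Set.mem_setOf_eq, not_lt] at hω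
    have hkey : (V ω)^2 ≤ (θhat ω - V ω)^2 := by nlinarith
    by_cases hc : t^2 ≤ (θhat ω - V ω)^2
    · exact Or.inl hc
    · exact Or.inr (by simp only [hCdef, Set.mem_setOf_eq]; linarith [lt_of_not_ge hc])
  have hcomplle : (μ Gᶜ).toReal ≤ 7/20 := by
    have h1 : (μ Gᶜ).toReal ≤ (μ (B ∪ C)).toReal :=
      ENNReal.toReal_mono (measure_ne_top _ _) (measure_mono hsub)
    have h2 : (μ (B ∪ C)).toReal ≤ (μ B).toReal + (μ C).toReal := by
      rw [← ENNReal.toReal_add (measure_ne_top _ _) (measure_ne_top _ _)]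
      exact ENNReal.toReal_mono (by finiteness) (measure_union_le _ _)
    linarith
  have hsum : (μ G).toReal + (μ Gᶜ).toReal = 1 := by
    rw [← ENNReal.toReal_add (measure_ne_top _ _) (measure_ne_top _ _),
      measure_add_measure_compl hG]
    simp
  linarith
end
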